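/- Let G and H be graphs with odd Hadwiger numbers oh(G) = s ≥ 2 and oh(H) = t ≥ 2. Then the odd Hadwiger number of the Cartesian product satisfies oh(G □ H) ≥ oh(K_s □ K_t), where K_s and K_t denote complete graphs on s and t vertices. -/

import Mathlib

open SimpleGraph

/-- `H` is an odd minor of `G`: there are pairwise vertex-disjoint subtrees of `G`, one for
each vertex of `H`, and a 2-colouring of the vertices which is proper on each tree, such that
for every edge of `H` there is a monochromatic edge of `G` between the corresponding trees. -/
def IsOddMinorOf {W V : Type*} (H : SimpleGraph W) (G : SimpleGraph V) : Prop :=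
  ∃ (T : W → G.Subgraph) (c : V → Fin 2),
    (∀ w, (T w).coe.IsTree) ∧
    (Pairwise fun w w' => Disjoint (T w).verts (T w').verts) ∧
    (∀ w, ∀ x y, (T w).Adj x y → c x ≠ c y) ∧
    (∀ w w', H.Adj w w' →
      ∃ x y, x ∈ (T w).verts ∧ y ∈ (T w').verts ∧ G.Adj x y ∧ c x = c y)

/-- The odd Hadwiger number of `G`: the largest `r` such that `K_r` is an odd minor of `G`. -/
noncomputable def oddHadwiger {V : Type*} [Fintype V] (G : SimpleGraph V) : ℕ :=
  sSup {r : ℕ | IsOddMinorOf (⊤ : SimpleGraph (Fin r)) G}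

/-- The Cartesian product `G □ H`. -/
def cartProd {α β : Type*} (G : SimpleGraph α) (H : SimpleGraph β) : SimpleGraph (α × β) where
  Adj x y := (x.1 = y.1 ∧ H.Adj x.2 y.2) ∨ (x.2 = y.2 ∧ G.Adj x.1 y.1)
  symm := by
    refine ⟨?_⟩
    rintro x y (⟨h1, h2⟩ | ⟨h1, h2⟩)
    · exact Or.inl ⟨h1.symm, h2.symm⟩
    · exact Or.inr ⟨h1.symm, h2.symm⟩
  loopless := by
    refine ⟨?_⟩
    rintro x (⟨_, h⟩ | ⟨_, h⟩)
    · exact H.irrefl h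
    · exact G.irrefl h

/-- The strong product `G ⊠ H`. -/
def strongProd {α β : Type*} (G : SimpleGraph α) (H : SimpleGraph β) : SimpleGraph (α × β) where
  Adj x y := (x.1 = y.1 ∧ H.Adj x.2 y.2) ∨ (x.2 = y.2 ∧ G.Adj x.1 y.1) ∨
    (G.Adj x.1 y.1 ∧ H.Adj x.2 y.2)
  symm := by
    refine ⟨?_⟩
    rintro x y (⟨h1, h2⟩ | ⟨h1, h2⟩ | ⟨h1, h2⟩)
    · exact Or.inl ⟨h1.symm, h2.symm⟩
    · exact Or.inr (Or.inl ⟨h1.symm, h2.symm⟩)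
    · exact Or.inr (Or.inr ⟨h1.symm, h2.symm⟩)
  loopless := by
    refine ⟨?_⟩
    rintro x (⟨_, h⟩ | ⟨_, h⟩ | ⟨h, _⟩)
    · exact H.irrefl h
    · exact G.irrefl h
    · exact G.irrefl h

/-- The lexicographic product `G ∘ H`. -/
def lexProd {α β : Type*} (G : SimpleGraph α) (H : SimpleGraph β) : SimpleGraph (α × β) where
  Adj x y := G.Adj x.1 y.1 ∨ (x.1 = y.1 ∧ H.Adj x.2 y.2)
  symm := by
    refine ⟨?_⟩
    rintro x y (h | ⟨h1, h2⟩)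
    · exact Or.inl h.symm
    · exact Or.inr ⟨h1.symm, h2.symm⟩
  loopless := by
    refine ⟨?_⟩
    rintro x (h | ⟨_, h⟩)
    · exact G.irrefl h
    · exact H.irrefl h

/-- The direct (tensor) product `G × H`. -/
def dirProd {α β : Type*} (G : SimpleGraph α) (H : SimpleGraph β) : SimpleGraph (α × β) where
  Adj x y := G.Adj x.1 y.1 ∧ H.Adj x.2 y.2
  symm := by
    refine ⟨?_⟩
    rintro x y ⟨h1, h2⟩
    exact ⟨h1.symm, h2.symm⟩
  loopless := by
    refine ⟨?_⟩
    rintro x ⟨h, _⟩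
    exact G.irrefl h

/-!
Odd minors whose branch sets are merely connected give the same relation, since a connected
branch set contains a spanning tree. In this form the relation is transitive (glue the branch
sets of the inner model along those of the outer one, shifting the inner colouring on each piece
by the outer colour) and compatible with the Cartesian product (the branch set of `(a, b)` is a
cross formed by a row copy of `T a` and a column copy of `S b`, coloured by the sum of the two
colourings). Hence `K_s □ K_t` is an odd minor of `G □ H`, and `oddHadwiger` is monotone under
odd minors.
-/

theorem cartProd_eq_boxProd {α β : Type*} (G : SimpleGraph α) (H : SimpleGraph β) :
    cartProd G H = G □ H := by
  ext x y
  simp only [cartProd, boxProd_adj]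
  tauto

namespace SimpleGraph.Subgraph

variable {V V' : Type*} {G : SimpleGraph V} {G' : SimpleGraph V'}

protected lemma Connected.exists_isTree_le {K : G.Subgraph} (h : K.Connected) :
    ∃ K' ≤ K, K'.verts = K.verts ∧ K'.coe.IsTree := by
  obtain ⟨T, hTK, hT⟩ := h.coe.exists_isTree_le
  let K' : G.Subgraph :=
    { verts := K.verts
      Adj := fun x y => ∃ (hx : x ∈ K.verts) (hy : y ∈ K.verts), T.Adj ⟨x, hx⟩ ⟨y, hy⟩
      adj_sub := fun ⟨_, _, hxy⟩ => K.adj_sub (hTK hxy)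
      edge_vert := fun ⟨hx, _, _⟩ => hx
      symm := ⟨fun _ _ ⟨hx, hy, hxy⟩ => ⟨hy, hx, hxy.symm⟩⟩ }
  have hK'T : K'.coe = T := by
    ext x y
    exact ⟨fun ⟨_, _, hxy⟩ => hxy, fun hxy => ⟨x.2, y.2, hxy⟩⟩
  exact ⟨K', ⟨subset_rfl, fun _ _ ⟨_, _, hxy⟩ => hTK hxy⟩, rfl, hK'T ▸ hT⟩

lemma connected_map (f : G →g G') {K : G.Subgraph} (h : K.Connected) : (K.map f).Connected := by
  let φ : K.coe →g (K.map f).coe :=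
    { toFun := fun x => ⟨f x, x, x.2, rfl⟩
      map_rel' := fun {x y} hxy => ⟨x, y, hxy, rfl, rfl⟩ }
  have hφ : Function.Surjective φ := by
    rintro ⟨_, x, hx, rfl⟩
    exact ⟨⟨x, hx⟩, rfl⟩
  exact Subgraph.connected_iff'.mpr (h.coe.map φ hφ)

lemma connected_of_cover {ι : Type*} {K : SimpleGraph ι} (hK : K.Connected) {U : G.Subgraph}
    {P : ι → G.Subgraph} (hP : ∀ i, (P i).Connected) (hPU : ∀ i, P i ≤ U)
    (hcover : U.verts ⊆ ⋃ i, (P i).verts)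
    (hglue : ∀ i j, K.Adj i j → ∃ x ∈ (P i).verts, ∃ y ∈ (P j).verts, U.Adj x y) :
    U.Connected := by
  have reach_piece : ∀ i {x y} (hx : x ∈ (P i).verts) (hy : y ∈ (P i).verts),
      U.coe.Reachable ⟨x, (hPU i).1 hx⟩ ⟨y, (hPU i).1 hy⟩ := fun i x y hx hy =>
    ((hP i).coe.preconnected ⟨x, hx⟩ ⟨y, hy⟩).map (Subgraph.inclusion (hPU i))
  have reach_walk : ∀ {i j} (_ : K.Walk i j) {x y} (hx : x ∈ (P i).verts)
      (hy : y ∈ (P j).verts), U.coe.Reachable ⟨x, (hPU i).1 hx⟩ ⟨y, (hPU j).1 hy⟩ := by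
    intro i j p
    induction p with
    | nil => exact reach_piece _
    | cons hij _ ih =>
      intro x y hx hy
      obtain ⟨x', hx', y', hy', hx'y'⟩ := hglue _ _ hij
      exact (reach_piece _ hx hx').trans
        ((Adj.reachable (G := U.coe) (u := ⟨x', _⟩) (v := ⟨y', (hPU _).1 hy'⟩) hx'y').trans
          (ih hy' hy))
  refine Subgraph.connected_iff.mpr ⟨Subgraph.preconnected_iff.mpr ?_, ?_⟩
  · rintro ⟨x, hx⟩ ⟨y, hy⟩
    obtain ⟨i, hxi⟩ := Set.mem_iUnion.mp (hcover hx)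
    obtain ⟨j, hyj⟩ := Set.mem_iUnion.mp (hcover hy)
    exact reach_walk (hK.preconnected i j).some hxi hyj
  · obtain ⟨i⟩ := hK.nonempty
    exact (hP i).nonempty.mono (hPU i).1

section glue

variable {W : Type*} {H : SimpleGraph W} (T : W → G.Subgraph) {p q : ∀ w w', H.Adj w w' → V}
  (hpq : ∀ w w' h, G.Adj (p w w' h) (q w w' h))

def glue (K : H.Subgraph) : G.Subgraph :=
  (⨆ w : K.verts, T w) ⊔ ⨆ (w) (w') (h : K.Adj w w'), G.subgraphOfAdj (hpq w w' (K.adj_sub h))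

variable {T hpq} {K : H.Subgraph}

lemma le_glue {w : W} (hw : w ∈ K.verts) : T w ≤ glue T hpq K :=
  le_sup_of_le_left (le_iSup (fun w : K.verts => T w) ⟨w, hw⟩)

lemma glue_adj {x y : V} : (glue T hpq K).Adj x y ↔
    (∃ w ∈ K.verts, (T w).Adj x y) ∨
      ∃ w w', ∃ h : K.Adj w w', s(p w w' (K.adj_sub h), q w w' (K.adj_sub h)) = s(x, y) := by
  simp [glue, subgraphOfAdj_adj]

lemma mem_verts_glue (hp : ∀ w w' h, p w w' h ∈ (T w).verts)
    (hq : ∀ w w' h, q w w' h ∈ (T w').verts) {x : V} :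
    x ∈ (glue T hpq K).verts ↔ ∃ w ∈ K.verts, x ∈ (T w).verts := by
  simp only [glue, verts_sup, verts_iSup, subgraphOfAdj_verts, Set.mem_union, Set.mem_iUnion,
    Set.mem_insert_iff, Set.mem_singleton_iff]
  constructor
  · rintro (⟨⟨w, hw⟩, hx⟩ | ⟨w, w', h, rfl | rfl⟩)
    · exact ⟨w, hw, hx⟩
    · exact ⟨w, K.edge_vert h, hp _ _ _⟩
    · exact ⟨w', K.edge_vert h.symm, hq _ _ _⟩
  · rintro ⟨w, hw, hx⟩
    exact Or.inl ⟨⟨w, hw⟩, hx⟩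

lemma connected_glue (hp : ∀ w w' h, p w w' h ∈ (T w).verts)
    (hq : ∀ w w' h, q w w' h ∈ (T w').verts) (hK : K.Connected) (hT : ∀ w, (T w).Connected) :
    (glue T hpq K).Connected := by
  refine connected_of_cover hK.coe (P := fun w : K.verts => T w) (fun w => hT w)
    (fun w => le_glue w.2) (fun x hx => ?_) (fun w w' h => ?_)
  · obtain ⟨w, hw, hx⟩ := (mem_verts_glue hp hq).mp hx
    exact Set.mem_iUnion.mpr ⟨⟨w, hw⟩, hx⟩
  · exact ⟨_, hp w w' (K.adj_sub h), _, hq w w' (K.adj_sub h),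
      glue_adj.mpr (Or.inr ⟨w, w', h, rfl⟩)⟩

end glue

end SimpleGraph.Subgraph

section OddModel

variable {V W : Type*}

structure IsOddModel (H : SimpleGraph W) (G : SimpleGraph V) (T : W → G.Subgraph)
    (c : V → Fin 2) : Prop where
  connected : ∀ w, (T w).Connected
  disjoint : Pairwise fun w w' => Disjoint (T w).verts (T w').verts
  proper : ∀ w x y, (T w).Adj x y → c x ≠ c y
  exists_adj : ∀ w w', H.Adj w w' →
    ∃ x ∈ (T w).verts, ∃ y ∈ (T w').verts, G.Adj x y ∧ c x = c y

variable {H : SimpleGraph W} {G : SimpleGraph V}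

theorem isOddMinorOf_iff_exists_isOddModel :
    IsOddMinorOf H G ↔ ∃ T c, IsOddModel H G T c := by
  constructor
  · rintro ⟨T, c, htree, hdisj, hprop, hadj⟩
    refine ⟨T, c, fun w => Subgraph.connected_iff'.mpr (htree w).connected, hdisj, hprop,
      fun w w' h => ?_⟩
    obtain ⟨x, y, hx, hy, hxy, hc⟩ := hadj w w' h
    exact ⟨x, hx, y, hy, hxy, hc⟩
  · rintro ⟨T, c, hT⟩
    choose T' hT'T hverts htree using fun w => (hT.connected w).exists_isTree_le
    refine ⟨T', c, htree, fun w w' hne => ?_, fun w x y hxy => hT.proper w x y ((hT'T w).2 hxy),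
      fun w w' h => ?_⟩
    · change Disjoint _ _
      rw [hverts, hverts]
      exact hT.disjoint hne
    · obtain ⟨x, hx, y, hy, hxy, hc⟩ := hT.exists_adj w w' h
      exact ⟨x, y, (hverts w).symm ▸ hx, (hverts w').symm ▸ hy, hxy, hc⟩

end OddModel

namespace IsOddModel

variable {U V W : Type*} {F : SimpleGraph U} {H : SimpleGraph W} {G : SimpleGraph V}
  {S : U → H.Subgraph} {d : W → Fin 2} {T : W → G.Subgraph} {c : V → Fin 2}

lemma eq_of_mem_of_mem (hT : IsOddModel H G T c) {x : V} {w w' : W} (hx : x ∈ (T w).verts)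
    (hx' : x ∈ (T w').verts) : w = w' := by
  by_contra hne
  exact Set.disjoint_left.mp (hT.disjoint hne) hx hx'

theorem trans (hS : IsOddModel F H S d) (hT : IsOddModel H G T c) :
    ∃ U c', IsOddModel F G U c' := by
  choose p hp q hq hpq hcpq using hT.exists_adj
  obtain ⟨c', hc'⟩ : ∃ c' : V → Fin 2, ∀ {w x}, x ∈ (T w).verts → c' x = c x + d w := by
    classical
    refine ⟨fun x => if h : ∃ w, x ∈ (T w).verts then c x + d h.choose else c x,
      fun {w x} hx => ?_⟩
    have h : ∃ w, x ∈ (T w).verts := ⟨w, hx⟩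
    simp only [dif_pos h, hT.eq_of_mem_of_mem h.choose_spec hx]
  have mem_glue : ∀ f x,
      x ∈ (Subgraph.glue T hpq (S f)).verts ↔ ∃ w ∈ (S f).verts, x ∈ (T w).verts :=
    fun f x => Subgraph.mem_verts_glue hp hq
  refine ⟨fun f => Subgraph.glue T hpq (S f), c', ⟨fun f => ?_, fun f f' hne => ?_, ?_, ?_⟩⟩
  · exact Subgraph.connected_glue hp hq (hS.connected f) hT.connected
  · refine Set.disjoint_left.mpr fun x hx hx' => ?_
    obtain ⟨w, hw, hxw⟩ := (mem_glue f _).mp hx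
    obtain ⟨w', hw', hxw'⟩ := (mem_glue f' _).mp hx'
    obtain rfl := hT.eq_of_mem_of_mem hxw hxw'
    exact Set.disjoint_left.mp (hS.disjoint hne) hw hw'
  · intro f x y hxy
    rcases Subgraph.glue_adj.mp hxy with ⟨w, -, hxy⟩ | ⟨w, w', h, hxy⟩
    · rw [hc' ((T w).edge_vert hxy), hc' ((T w).edge_vert hxy.symm), Ne, add_left_inj]
      exact hT.proper w x y hxy
    · have hne := hS.proper f w w' h
      rcases Sym2.eq_iff.mp hxy with ⟨rfl, rfl⟩ | ⟨rfl, rfl⟩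
      · rw [hc' (hp _ _ _), hc' (hq _ _ _), hcpq, Ne, add_right_inj]
        exact hne
      · rw [hc' (hp _ _ _), hc' (hq _ _ _), hcpq, Ne, add_right_inj]
        exact hne.symm
  · intro f f' hff'
    obtain ⟨w, hw, w', hw', hww', hd⟩ := hS.exists_adj f f' hff'
    refine ⟨p w w' hww', (mem_glue f _).mpr ⟨w, hw, hp _ _ _⟩, q w w' hww',
      (mem_glue f' _).mpr ⟨w', hw', hq _ _ _⟩, hpq _ _ _, ?_⟩
    rw [hc' (hp _ _ _), hc' (hq _ _ _), hcpq, hd]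

end IsOddModel

namespace IsOddModel

variable {α β V W : Type*} {A : SimpleGraph α} {B : SimpleGraph β} {G : SimpleGraph V}
  {H : SimpleGraph W} {T : α → G.Subgraph} {c : V → Fin 2} {S : β → H.Subgraph} {d : W → Fin 2}

theorem boxProd (hT : IsOddModel A G T c) (hS : IsOddModel B H S d) :
    ∃ U e, IsOddModel (A □ B) (G □ H) U e := by
  choose x₀ hx₀ using fun a => (hT.connected a).nonempty
  choose y₀ hy₀ using fun b => (hS.connected b).nonempty
  let U : α × β → (G □ H).Subgraph := fun ab =>
    (T ab.1).map (G.boxProdLeft H (y₀ ab.2)).toHom ⊔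
      (S ab.2).map (G.boxProdRight H (x₀ ab.1)).toHom
  have mem_U : ∀ {ab z}, z ∈ (U ab).verts → z.1 ∈ (T ab.1).verts ∧ z.2 ∈ (S ab.2).verts := by
    rintro ⟨a, b⟩ z (⟨x, hx, rfl⟩ | ⟨y, hy, rfl⟩)
    · exact ⟨hx, hy₀ b⟩
    · exact ⟨hx₀ a, hy⟩
  refine ⟨U, fun z => c z.1 + d z.2, ⟨fun ab => ?_, fun ab ab' hne => ?_, ?_, ?_⟩⟩
  · exact Subgraph.connected_sup (Subgraph.connected_map _ (hT.connected _)).preconnected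
      (Subgraph.connected_map _ (hS.connected _)).preconnected
      ⟨(x₀ ab.1, y₀ ab.2), ⟨x₀ ab.1, hx₀ _, rfl⟩, ⟨y₀ ab.2, hy₀ _, rfl⟩⟩
  · refine Set.disjoint_left.mpr fun z hz hz' => hne (Prod.ext ?_ ?_)
    · exact hT.eq_of_mem_of_mem (mem_U hz).1 (mem_U hz').1
    · exact hS.eq_of_mem_of_mem (mem_U hz).2 (mem_U hz').2
  · rintro ⟨a, b⟩ z z' (⟨x, x', hxx', rfl, rfl⟩ | ⟨y, y', hyy', rfl, rfl⟩)
    · simpa using hT.proper a x x' hxx'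
    · simpa using hS.proper b y y' hyy'
  · rintro ⟨a, b⟩ ⟨a', b'⟩ hadj
    rcases boxProd_adj.mp hadj with ⟨ha, rfl⟩ | ⟨hb, rfl⟩
    · obtain ⟨x, hx, x', hx', hxx', hc⟩ := hT.exists_adj a a' ha
      exact ⟨(x, y₀ b), Or.inl ⟨x, hx, rfl⟩, (x', y₀ b), Or.inl ⟨x', hx', rfl⟩,
        boxProd_adj_left.mpr hxx', by simp [hc]⟩
    · obtain ⟨y, hy, y', hy', hyy', hd⟩ := hS.exists_adj b b' hb
      exact ⟨(x₀ a, y), Or.inr ⟨y, hy, rfl⟩, (x₀ a, y'), Or.inr ⟨y', hy', rfl⟩,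
        boxProd_adj_right.mpr hyy', by simp [hd]⟩

end IsOddModel

namespace IsOddMinorOf

variable {α β U V W : Type*} {A : SimpleGraph α} {B : SimpleGraph β} {F : SimpleGraph U}
  {G : SimpleGraph V} {H : SimpleGraph W}

theorem trans (hFH : IsOddMinorOf F H) (hHG : IsOddMinorOf H G) : IsOddMinorOf F G := by
  obtain ⟨S, d, hS⟩ := isOddMinorOf_iff_exists_isOddModel.mp hFH
  obtain ⟨T, c, hT⟩ := isOddMinorOf_iff_exists_isOddModel.mp hHG
  exact isOddMinorOf_iff_exists_isOddModel.mpr (hS.trans hT)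

theorem boxProd (hAG : IsOddMinorOf A G) (hBH : IsOddMinorOf B H) :
    IsOddMinorOf (A □ B) (G □ H) := by
  obtain ⟨T, c, hT⟩ := isOddMinorOf_iff_exists_isOddModel.mp hAG
  obtain ⟨S, d, hS⟩ := isOddMinorOf_iff_exists_isOddModel.mp hBH
  exact isOddMinorOf_iff_exists_isOddModel.mpr (hT.boxProd hS)

theorem of_isEmpty [IsEmpty W] (H : SimpleGraph W) (G : SimpleGraph V) : IsOddMinorOf H G :=
  ⟨isEmptyElim, 0, isEmptyElim, fun w => isEmptyElim w, fun w => isEmptyElim w,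
    fun w => isEmptyElim w⟩

theorem card_le [Fintype V] [Fintype W] (h : IsOddMinorOf H G) :
    Fintype.card W ≤ Fintype.card V := by
  obtain ⟨T, -, htree, hdisj, -, -⟩ := h
  let x : ∀ w, (T w).verts := fun w => (htree w).connected.nonempty.some
  refine Fintype.card_le_of_injective (fun w => (x w).1) fun w w' (hww' : (x w).1 = x w') => ?_
  by_contra hne
  exact Set.disjoint_left.mp (hdisj hne) (x w).2 (hww' ▸ (x w').2)

end IsOddMinorOf

section oddHadwiger

variable {V W : Type*} [Fintype V] {G : SimpleGraph V}

lemma bddAbove_setOf_isOddMinorOf :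
    BddAbove {r : ℕ | IsOddMinorOf (⊤ : SimpleGraph (Fin r)) G} :=
  ⟨Fintype.card V, fun r hr => by simpa using hr.card_le⟩

lemma isOddMinorOf_oddHadwiger (G : SimpleGraph V) :
    IsOddMinorOf (⊤ : SimpleGraph (Fin (oddHadwiger G))) G :=
  Nat.sSup_mem ⟨0, IsOddMinorOf.of_isEmpty _ _⟩ bddAbove_setOf_isOddMinorOf

lemma le_oddHadwiger {r : ℕ} (h : IsOddMinorOf (⊤ : SimpleGraph (Fin r)) G) :
    r ≤ oddHadwiger G :=
  le_csSup bddAbove_setOf_isOddMinorOf h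

lemma IsOddMinorOf.oddHadwiger_le [Fintype W] {H : SimpleGraph W} (h : IsOddMinorOf H G) :
    oddHadwiger H ≤ oddHadwiger G :=
  le_oddHadwiger ((isOddMinorOf_oddHadwiger H).trans h)

end oddHadwiger

theorem stmt_0_general {V W : Type*} [Fintype V] [Fintype W]
    (G : SimpleGraph V) (H : SimpleGraph W) (s t : ℕ)
    (hs : oddHadwiger G = s)
    (ht : oddHadwiger H = t) :
    oddHadwiger (cartProd G H) ≥
      oddHadwiger (cartProd (⊤ : SimpleGraph (Fin s)) (⊤ : SimpleGraph (Fin t))) := by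
  subst hs ht
  rw [cartProd_eq_boxProd, cartProd_eq_boxProd]
  exact ((isOddMinorOf_oddHadwiger G).boxProd (isOddMinorOf_oddHadwiger H)).oddHadwiger_le

theorem stmt_0 {V W : Type*} [Fintype V] [Fintype W]
    (G : SimpleGraph V) (H : SimpleGraph W) (s t : ℕ)
    (hs : oddHadwiger G = s) (hs2 : 2 ≤ s)
    (ht : oddHadwiger H = t) (ht2 : 2 ≤ t) :
    oddHadwiger (cartProd G H) ≥
      oddHadwiger (cartProd (⊤ : SimpleGraph (Fin s)) (⊤ : SimpleGraph (Fin t))) :=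
  stmt_0_general G H s t hs ht
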